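/- Let κ ∈ {1, −1}. Let V₁, V₂ be complex vector spaces with ℂ-bilinear forms B₁ : V₁ × V₁ → ℂ and B₂ : V₂ × V₂ → ℂ, and define the bilinear form B on V := V₁ × V₂ by B((a, b), (a', b')) := B₁(a, a') + B₂(b, b'). For an even-length list z₁, …, z_{2N} of vectors of V define A(z₁, …, z_{2N}) := (1/N!) · Σ_{σ ∈ S_{2N}} κ^{|σ|} · Π_{j=1}^{N} B(z_{σ(j)}, z_{σ(2N+1−j)}), with the convention A(empty list) = 1, and define A₁, A₂ analogously from B₁, B₂; here κ^{|σ|} is the sign of σ if κ = −1 and 1 if κ = 1. Let η₁, …, η_p ∈ V₁ and ξ₁, …, ξ_q ∈ V₂ with p + q even, and consider the list z := ((η₁, 0), …, (η_p, 0), (0, ξ₁), …, (0, ξ_q)). Then: if p and q are both odd, A(z) = 0; and if p and q are both even, A(z) = A₁(η₁, …, η_p) · A₂(ξ₁, …, ξ_q). -/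

import Mathlib

/-!
Factor `ampl` through *slots*: slot `j` is the pair of positions `j` and `2N - 1 - j`. Since `B`
pairs a vector of `V₁ × 0` with one of `0 × V₂` to zero, only permutations that send both
positions of every slot into the same block, `[0, p)` or `[p, 2N)`, contribute. Counting positions
then shows that `p` is even, which settles the odd case.

For `p = 2P`, `q = 2Q`, group the contributing permutations by the set of `P` slots sent into the
first block. Relabelling the slots is an even permutation of positions that preserves the
summands, so each of the `C(P + Q, P)` groups has the same sum. The group of the last `P` slots is
parametrised by pairs `(σ₁, σ₂)`, one permutation per block; signs multiply, because the
bookkeeping permutation between the two layouts is a rotation by the even amount `2P`. Finally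
`C(P + Q, P) = (P + Q)! / (P! Q!)` converts the normalisations.
-/

/-- `κ^{|σ|}`: the sign of the permutation `σ` if `κ = -1`, and `1` if `κ = 1`. -/
noncomputable def ksgn (κ : ℂ) {n : ℕ} (σ : Equiv.Perm (Fin n)) : ℂ :=
  if κ = -1 then ((Equiv.Perm.sign σ : ℤ) : ℂ) else 1

/-- The free-field amplitude of a generating state given by an even-length list `z`:
`A(z₁, …, z_{2N}) = (1/N!) Σ_{σ ∈ S_{2N}} κ^{|σ|} Π_{j=1}^{N} B (z_{σ(j)}) (z_{σ(2N+1-j)})`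
(for `N = 0` this equals `1`). -/
noncomputable def ampl (κ : ℂ) {V : Type*} [AddCommGroup V] [Module ℂ V]
    (B : V →ₗ[ℂ] V →ₗ[ℂ] ℂ) (N : ℕ) (z : Fin (2 * N) → V) : ℂ :=
  (N.factorial : ℂ)⁻¹ * ∑ σ : Equiv.Perm (Fin (2 * N)), ksgn κ σ *
    ∏ j : Fin N,
      B (z (σ (Fin.castLE (by omega) j))) (z (σ (Fin.castLE (by omega : N ≤ 2 * N) j).rev))

open Equiv Finset

namespace Gluing

lemma ksgn_eq_mul_of_sign_eq {κ : ℂ} {n m l : ℕ} {σ : Perm (Fin n)} {σ₁ : Perm (Fin m)}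
    {σ₂ : Perm (Fin l)} (h : Perm.sign σ = Perm.sign σ₁ * Perm.sign σ₂) :
    ksgn κ σ = ksgn κ σ₁ * ksgn κ σ₂ := by
  unfold ksgn
  split_ifs <;> simp [h]

lemma ksgn_mul_of_sign_eq_one {κ : ℂ} {n : ℕ} (σ : Perm (Fin n)) {τ : Perm (Fin n)}
    (h : Perm.sign τ = 1) : ksgn κ (σ * τ) = ksgn κ σ := by
  simp [ksgn, h]

/-- Slot `j` of `ampl` consists of the positions `j` (`inl j`) and `2N - 1 - j` (`inr j`). -/
def slotPos (N : ℕ) : Fin N ⊕ Fin N ≃ Fin (2 * N) :=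
  (Equiv.sumCongr (Equiv.refl _) Fin.revPerm).trans
    (finSumFinEquiv.trans (finCongr (two_mul N).symm))

@[simp] lemma val_slotPos_inl {N : ℕ} (j : Fin N) : (slotPos N (.inl j) : ℕ) = j := by
  simp [slotPos]

@[simp] lemma val_slotPos_inr {N : ℕ} (j : Fin N) :
    (slotPos N (.inr j) : ℕ) = 2 * N - 1 - j := by
  simp [slotPos]; omega

lemma slotPos_inl {N : ℕ} (j : Fin N) : slotPos N (.inl j) = Fin.castLE (by omega) j := by
  ext; simp

lemma slotPos_inr {N : ℕ} (j : Fin N) :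
    slotPos N (.inr j) = (Fin.castLE (by omega : N ≤ 2 * N) j).rev := by
  ext; simp; omega

def slotOf {N : ℕ} (x : Fin (2 * N)) : Fin N :=
  Sum.elim id id ((slotPos N).symm x)

@[simp] lemma slotOf_slotPos {N : ℕ} (s : Fin N ⊕ Fin N) :
    slotOf (slotPos N s) = Sum.elim id id s := by
  simp [slotOf]

lemma val_slotOf {N : ℕ} (x : Fin (2 * N)) :
    (slotOf x : ℕ) = if (x : ℕ) < N then (x : ℕ) else 2 * N - 1 - x := by
  obtain ⟨s, rfl⟩ := (slotPos N).surjective x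
  rcases s with j | j
  · simp
  · simp only [slotOf_slotPos, Sum.elim_inr, id_eq, val_slotPos_inr]
    split_ifs <;> omega

def slotPerm {N : ℕ} (τ : Perm (Fin N)) : Perm (Fin (2 * N)) :=
  (slotPos N).permCongr (τ.sumCongr τ)

@[simp] lemma slotPerm_slotPos {N : ℕ} (τ : Perm (Fin N)) (s : Fin N ⊕ Fin N) :
    slotPerm τ (slotPos N s) = slotPos N (Sum.map τ τ s) := by
  simp [slotPerm, Equiv.permCongr_apply]

lemma slotOf_slotPerm {N : ℕ} (τ : Perm (Fin N)) (x : Fin (2 * N)) :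
    slotOf (slotPerm τ x) = τ (slotOf x) := by
  obtain ⟨s, rfl⟩ := (slotPos N).surjective x
  rcases s with j | j <;> simp

lemma sign_slotPerm {N : ℕ} (τ : Perm (Fin N)) : Perm.sign (slotPerm τ) = 1 := by
  rw [slotPerm, Perm.sign_permCongr, Perm.sign_sumCongr, Int.units_mul_self]

section Term

variable {V : Type*} [AddCommGroup V] [Module ℂ V] (κ : ℂ) (B : V →ₗ[ℂ] V →ₗ[ℂ] ℂ)
  {N : ℕ} (z : Fin (2 * N) → V)

noncomputable def pairTerm (σ : Perm (Fin (2 * N))) : ℂ :=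
  ksgn κ σ * ∏ j, B (z (σ (slotPos N (.inl j)))) (z (σ (slotPos N (.inr j))))

lemma ampl_eq_sum_pairTerm :
    ampl κ B N z = (N.factorial : ℂ)⁻¹ * ∑ σ, pairTerm κ B z σ := by
  simp only [ampl, pairTerm, slotPos_inl, slotPos_inr]

lemma pairTerm_mul_slotPerm (σ : Perm (Fin (2 * N))) (τ : Perm (Fin N)) :
    pairTerm κ B z (σ * slotPerm τ) = pairTerm κ B z σ := by
  simp only [pairTerm, ksgn_mul_of_sign_eq_one σ (sign_slotPerm τ), Perm.mul_apply,
    slotPerm_slotPos, Sum.map_inl, Sum.map_inr]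
  rw [Equiv.prod_comp τ fun j => B (z (σ (slotPos N (.inl j)))) (z (σ (slotPos N (.inr j))))]

def BlockOrthogonal (p : ℕ) : Prop :=
  ∀ x y : Fin (2 * N), ¬((x : ℕ) < p ↔ (y : ℕ) < p) → B (z x) (z y) = 0

def SplitsAt (p : ℕ) (S : Finset (Fin N)) (σ : Perm (Fin (2 * N))) : Prop :=
  ∀ x, (σ x : ℕ) < p ↔ slotOf x ∈ S

instance {p : ℕ} {S : Finset (Fin N)} : DecidablePred (SplitsAt p S) :=
  fun _ => inferInstanceAs (Decidable (∀ _, _))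

variable {κ B z}

lemma SplitsAt.unique {p : ℕ} {S S' : Finset (Fin N)} {σ : Perm (Fin (2 * N))}
    (h : SplitsAt p S σ) (h' : SplitsAt p S' σ) : S = S' := by
  ext j
  simpa using (h (slotPos N (.inl j))).symm.trans (h' (slotPos N (.inl j)))

lemma SplitsAt.two_mul_card {p : ℕ} {S : Finset (Fin N)} {σ : Perm (Fin (2 * N))}
    (h : SplitsAt p S σ) (hp : p ≤ 2 * N) : 2 * #S = p := by
  calc 2 * #S
      = ∑ s : Fin N ⊕ Fin N, if slotOf (slotPos N s) ∈ S then 1 else 0 := by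
        rw [Fintype.sum_sum_type]
        simp [two_mul]
    _ = ∑ x, if (σ x : ℕ) < p then 1 else 0 := by
        rw [(slotPos N).sum_comp (fun x => if slotOf x ∈ S then 1 else 0)]
        exact Fintype.sum_congr _ _ fun x => if_congr (h x).symm rfl rfl
    _ = ∑ y : Fin (2 * N), if (y : ℕ) < p then 1 else 0 :=
        Equiv.sum_comp σ (fun y : Fin (2 * N) => if (y : ℕ) < p then 1 else 0)
    _ = p := by
        rw [← Finset.card_filter, Fin.card_filter_val_lt]
        omega

lemma splitsAt_mul_slotPerm_iff {p : ℕ} {S : Finset (Fin N)} {σ : Perm (Fin (2 * N))}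
    {τ : Perm (Fin N)} : SplitsAt p S (σ * slotPerm τ) ↔ SplitsAt p (S.map τ.toEmbedding) σ := by
  constructor
  · intro h y
    obtain ⟨x, rfl⟩ := (slotPerm τ).surjective y
    simpa [Finset.mem_map_equiv, slotOf_slotPerm] using h x
  · intro h x
    simpa [Finset.mem_map_equiv, slotOf_slotPerm] using h (slotPerm τ x)

lemma exists_splitsAt_of_pairTerm_ne_zero {p : ℕ}
    (hz : BlockOrthogonal B z p)
    {σ : Perm (Fin (2 * N))} (hσ : pairTerm κ B z σ ≠ 0) :
    ∃ S, SplitsAt p S σ := by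
  refine ⟨univ.filter fun j => (σ (slotPos N (.inl j)) : ℕ) < p, fun x => ?_⟩
  obtain ⟨s, rfl⟩ := (slotPos N).surjective x
  rcases s with j | j
  · simp
  · have hj : B (z (σ (slotPos N (.inl j)))) (z (σ (slotPos N (.inr j)))) ≠ 0 :=
      Finset.prod_ne_zero_iff.1 (right_ne_zero_of_mul hσ) j (mem_univ j)
    have := not_imp_comm.1 (hz _ _) hj
    simp [this]

lemma sum_pairTerm_eq_zero_of_odd {p : ℕ}
    (hz : BlockOrthogonal B z p)
    (hp : Odd p) (hpN : p ≤ 2 * N) : ∑ σ, pairTerm κ B z σ = 0 := by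
  refine Finset.sum_eq_zero fun σ _ => ?_
  by_contra hσ
  obtain ⟨S, hS⟩ := exists_splitsAt_of_pairTerm_ne_zero hz hσ
  obtain ⟨m, rfl⟩ := hp
  have := hS.two_mul_card hpN
  omega

lemma sum_ite_splitsAt_eq_of_card_eq {p : ℕ} {S S' : Finset (Fin N)} (h : #S = #S') :
    ∑ σ, (if SplitsAt p S σ then pairTerm κ B z σ else 0) =
      ∑ σ, (if SplitsAt p S' σ then pairTerm κ B z σ else 0) := by
  obtain ⟨τ, hτ⟩ := Perm.exists_map_finset_eq S S' h
  rw [← Equiv.sum_comp (Equiv.mulRight (slotPerm τ))]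
  simp only [Equiv.coe_mulRight, splitsAt_mul_slotPerm_iff, pairTerm_mul_slotPerm, hτ]

lemma sum_pairTerm_eq_sum_powersetCard {P : ℕ}
    (hz : BlockOrthogonal B z (2 * P))
    (hP : P ≤ N) :
    ∑ σ, pairTerm κ B z σ = ∑ S ∈ powersetCard P univ,
      ∑ σ, (if SplitsAt (2 * P) S σ then pairTerm κ B z σ else 0) := by
  rw [Finset.sum_comm]
  refine Fintype.sum_congr _ _ fun σ => ?_
  by_cases hσ : pairTerm κ B z σ = 0
  · simp [hσ]
  obtain ⟨S, hS⟩ := exists_splitsAt_of_pairTerm_ne_zero hz hσ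
  have hcard : #S = P := by
    have := hS.two_mul_card (by omega)
    omega
  rw [Finset.sum_eq_single_of_mem S (by simp [hcard])
    fun S' _ hS' => if_neg fun h => hS' (h.unique hS), if_pos hS]

lemma sum_pairTerm_eq_choose_mul {P : ℕ}
    (hz : BlockOrthogonal B z (2 * P))
    {S₀ : Finset (Fin N)} (hS₀ : #S₀ = P) :
    ∑ σ, pairTerm κ B z σ =
      N.choose P * ∑ σ, (if SplitsAt (2 * P) S₀ σ then pairTerm κ B z σ else 0) := by
  have hP : P ≤ N := hS₀ ▸ (card_le_univ S₀).trans_eq (Fintype.card_fin N)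
  rw [sum_pairTerm_eq_sum_powersetCard hz hP, Finset.sum_congr rfl fun S hS =>
      sum_ite_splitsAt_eq_of_card_eq ((mem_powersetCard.1 hS).2.trans hS₀.symm),
    sum_const, card_powersetCard, card_univ, Fintype.card_fin, nsmul_eq_mul]

end Term

lemma coe_finRotate_pow_apply {n : ℕ} (k : ℕ) (i : Fin n) :
    ((finRotate n ^ k) i : ℕ) = (i + k) % n := by
  induction k with
  | zero => simp [Nat.mod_eq_of_lt i.isLt]
  | succ k ih =>
    have := i.neZero
    rw [pow_succ', Perm.mul_apply, finRotate_apply, Fin.val_add, ih, Fin.val_one',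
      Nat.add_mod_mod, Nat.mod_add_mod, add_assoc]

section Blocks

variable {P Q : ℕ}

variable (P Q) in
def windowSplit : Fin (2 * P + Q) ⊕ Fin Q ≃ Fin (2 * (Q + P)) :=
  finSumFinEquiv.trans (finCongr (by omega))

variable (P Q) in
/-- Rotation of the first `2P + Q` positions by `2P`; it carries the positions `[Q, Q + 2P)` of
the last `P` slots onto `[0, 2P)`. -/
def windowRot : Perm (Fin (2 * (Q + P))) :=
  (windowSplit P Q).permCongr ((finRotate (2 * P + Q) ^ (2 * P)).sumCongr 1)

lemma sign_windowRot : Perm.sign (windowRot P Q) = 1 := by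
  rw [windowRot, Perm.sign_permCongr, Perm.sign_sumCongr, map_pow, pow_mul, Int.units_sq,
    one_pow, Perm.sign_one, mul_one]

lemma val_windowRot (x : Fin (2 * (Q + P))) :
    (windowRot P Q x : ℕ) =
      if (x : ℕ) < Q then x + 2 * P else if (x : ℕ) < 2 * P + Q then x - Q else x := by
  obtain ⟨y, rfl⟩ := (windowSplit P Q).surjective x
  rcases y with a | b
  · have ha := a.isLt
    have hmod : ((a : ℕ) + 2 * P) % (2 * P + Q) = if (a : ℕ) < Q then a + 2 * P else a - Q := by
      split_ifs
      · exact Nat.mod_eq_of_lt (by omega)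
      · rw [show (a : ℕ) + 2 * P = a - Q + (2 * P + Q) by omega, Nat.add_mod_right,
          Nat.mod_eq_of_lt (by omega)]
    simp [windowRot, windowSplit, Equiv.permCongr_apply, coe_finRotate_pow_apply, hmod]
  · simp [windowRot, windowSplit, Equiv.permCongr_apply]
    omega

variable (P Q) in
def blockEquiv : Fin (2 * P) ⊕ Fin (2 * Q) ≃ Fin (2 * (Q + P)) :=
  finSumFinEquiv.trans (finCongr (by omega))

@[simp] lemma val_blockEquiv_inl (i : Fin (2 * P)) : (blockEquiv P Q (.inl i) : ℕ) = i := by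
  simp [blockEquiv]

@[simp] lemma val_blockEquiv_inr (i : Fin (2 * Q)) :
    (blockEquiv P Q (.inr i) : ℕ) = 2 * P + i := by
  simp [blockEquiv]

lemma val_blockEquiv_lt_iff (y : Fin (2 * P) ⊕ Fin (2 * Q)) :
    (blockEquiv P Q y : ℕ) < 2 * P ↔ y.isLeft := by
  rcases y with i | i <;> simp [i.isLt]

lemma windowRot_slotPos_natAdd (s : Fin P ⊕ Fin P) :
    windowRot P Q (slotPos (Q + P) (s.map (Fin.natAdd Q) (Fin.natAdd Q))) =
      blockEquiv P Q (.inl (slotPos P s)) := by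
  ext
  rcases s with k | k <;>
  · have := k.isLt
    simp only [Sum.map_inl, Sum.map_inr, val_windowRot, val_slotPos_inl, val_slotPos_inr,
      val_blockEquiv_inl, Fin.val_natAdd]
    split_ifs <;> omega

lemma windowRot_slotPos_castAdd (s : Fin Q ⊕ Fin Q) :
    windowRot P Q (slotPos (Q + P) (s.map (Fin.castAdd P) (Fin.castAdd P))) =
      blockEquiv P Q (.inr (slotPos Q s)) := by
  ext
  rcases s with k | k <;>
  · have := k.isLt
    simp only [Sum.map_inl, Sum.map_inr, val_windowRot, val_slotPos_inl, val_slotPos_inr,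
      val_blockEquiv_inr, Fin.val_castAdd]
    split_ifs <;> omega

variable (P Q) in
def lastSlots : Finset (Fin (Q + P)) :=
  univ.map (Fin.natAddEmb Q)

lemma card_lastSlots : #(lastSlots P Q) = P := by
  simp [lastSlots]

lemma mem_lastSlots {j : Fin (Q + P)} : j ∈ lastSlots P Q ↔ Q ≤ (j : ℕ) := by
  refine ⟨fun h => ?_, fun h => mem_map.2 ⟨⟨j - Q, by omega⟩, mem_univ _, by ext; simp; omega⟩⟩
  obtain ⟨k, -, rfl⟩ := mem_map.1 h
  simp

lemma splitsAt_lastSlots_iff {σ : Perm (Fin (2 * (Q + P)))} :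
    SplitsAt (2 * P) (lastSlots P Q) σ ↔
      ∀ x, ((σ x : ℕ) < 2 * P ↔ (windowRot P Q x : ℕ) < 2 * P) := by
  refine forall_congr' fun x => ?_
  rw [mem_lastSlots, val_windowRot, val_slotOf]
  split_ifs <;> omega

/-- Runs `σ₁` on the last `P` slots and `σ₂` on the first `Q` slots, landing in the blocks
`[0, 2P)` and `[2P, 2(Q + P))` respectively. -/
def gluePerm (σ₁ : Perm (Fin (2 * P))) (σ₂ : Perm (Fin (2 * Q))) : Perm (Fin (2 * (Q + P))) :=
  (blockEquiv P Q).permCongr (σ₁.sumCongr σ₂) * windowRot P Q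

lemma sign_gluePerm (σ₁ : Perm (Fin (2 * P))) (σ₂ : Perm (Fin (2 * Q))) :
    Perm.sign (gluePerm σ₁ σ₂) = Perm.sign σ₁ * Perm.sign σ₂ := by
  rw [gluePerm, map_mul, sign_windowRot, mul_one, Perm.sign_permCongr, Perm.sign_sumCongr]

lemma gluePerm_injective :
    Function.Injective fun σ : Perm (Fin (2 * P)) × Perm (Fin (2 * Q)) => gluePerm σ.1 σ.2 := by
  intro σ τ h
  exact Perm.sumCongrHom_injective ((blockEquiv P Q).permCongr.injective (mul_right_cancel h))

lemma gluePerm_slotPos_natAdd (σ₁ : Perm (Fin (2 * P))) (σ₂ : Perm (Fin (2 * Q)))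
    (s : Fin P ⊕ Fin P) :
    gluePerm σ₁ σ₂ (slotPos (Q + P) (s.map (Fin.natAdd Q) (Fin.natAdd Q))) =
      blockEquiv P Q (.inl (σ₁ (slotPos P s))) := by
  simp [gluePerm, windowRot_slotPos_natAdd, Equiv.permCongr_apply]

lemma gluePerm_slotPos_castAdd (σ₁ : Perm (Fin (2 * P))) (σ₂ : Perm (Fin (2 * Q)))
    (s : Fin Q ⊕ Fin Q) :
    gluePerm σ₁ σ₂ (slotPos (Q + P) (s.map (Fin.castAdd P) (Fin.castAdd P))) =
      blockEquiv P Q (.inr (σ₂ (slotPos Q s))) := by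
  simp [gluePerm, windowRot_slotPos_castAdd, Equiv.permCongr_apply]

lemma splitsAt_gluePerm (σ₁ : Perm (Fin (2 * P))) (σ₂ : Perm (Fin (2 * Q))) :
    SplitsAt (2 * P) (lastSlots P Q) (gluePerm σ₁ σ₂) := by
  refine splitsAt_lastSlots_iff.2 fun x => ?_
  obtain ⟨y, hy⟩ := (blockEquiv P Q).surjective (windowRot P Q x)
  rw [gluePerm, Perm.mul_apply, Equiv.permCongr_apply, ← hy, Equiv.symm_apply_apply,
    val_blockEquiv_lt_iff, val_blockEquiv_lt_iff]
  rcases y with i | i <;> rfl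

lemma exists_gluePerm_of_splitsAt {σ : Perm (Fin (2 * (Q + P)))}
    (h : SplitsAt (2 * P) (lastSlots P Q) σ) : ∃ σ₁ σ₂, gluePerm σ₁ σ₂ = σ := by
  set ψ := (blockEquiv P Q).permCongr.symm (σ * (windowRot P Q)⁻¹)
  have hψ : Set.MapsTo ψ (Set.range Sum.inl) (Set.range Sum.inl) := by
    rintro _ ⟨i, rfl⟩
    have hw : (σ ((windowRot P Q).symm (blockEquiv P Q (.inl i))) : ℕ) < 2 * P := by
      rw [splitsAt_lastSlots_iff.1 h, Equiv.apply_symm_apply, val_blockEquiv_inl]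
      exact i.isLt
    rw [← Equiv.apply_symm_apply (blockEquiv P Q) (σ _), val_blockEquiv_lt_iff,
      Sum.isLeft_iff] at hw
    obtain ⟨j, hj⟩ := hw
    exact ⟨j, by simp [ψ, Equiv.permCongr_apply, hj]⟩
  obtain ⟨⟨σ₁, σ₂⟩, hσ⟩ := Perm.mem_sumCongrHom_range_of_perm_mapsTo_inl hψ
  refine ⟨σ₁, σ₂, ?_⟩
  have hσ : σ₁.sumCongr σ₂ = ψ := hσ
  rw [gluePerm, hσ, Equiv.apply_symm_apply, inv_mul_cancel_right]

end Blocks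

section GlueList

variable {V₁ V₂ : Type*} [Zero V₁] [Zero V₂]

def glueList {p q N : ℕ} (η : Fin p → V₁) (ξ : Fin q → V₂) (h : p + q = 2 * N) :
    Fin (2 * N) → V₁ × V₂ :=
  fun i => Fin.append (fun j => (η j, (0 : V₂))) (fun j => ((0 : V₁), ξ j)) (Fin.cast h.symm i)

lemma glueList_snd_eq_zero {p q N : ℕ} (η : Fin p → V₁) (ξ : Fin q → V₂) (h : p + q = 2 * N)
    {x : Fin (2 * N)} (hx : (x : ℕ) < p) : (glueList η ξ h x).2 = 0 := by
  have hx' : Fin.cast h.symm x = Fin.castAdd q ⟨x, hx⟩ := by ext; simp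
  rw [glueList, hx', Fin.append_left]

lemma glueList_fst_eq_zero {p q N : ℕ} (η : Fin p → V₁) (ξ : Fin q → V₂) (h : p + q = 2 * N)
    {x : Fin (2 * N)} (hx : p ≤ (x : ℕ)) : (glueList η ξ h x).1 = 0 := by
  have hx' : Fin.cast h.symm x = Fin.natAdd p ⟨x - p, by omega⟩ := by ext; simp; omega
  rw [glueList, hx', Fin.append_right]

variable {P Q : ℕ} (η : Fin (2 * P) → V₁) (ξ : Fin (2 * Q) → V₂)
  (h : 2 * P + 2 * Q = 2 * (Q + P))

lemma glueList_blockEquiv_inl (i : Fin (2 * P)) :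
    glueList η ξ h (blockEquiv P Q (.inl i)) = (η i, 0) := by
  simp [glueList, blockEquiv]

lemma glueList_blockEquiv_inr (i : Fin (2 * Q)) :
    glueList η ξ h (blockEquiv P Q (.inr i)) = (0, ξ i) := by
  simp [glueList, blockEquiv]

end GlueList

section Glue

variable {V₁ V₂ : Type*} [AddCommGroup V₁] [Module ℂ V₁] [AddCommGroup V₂] [Module ℂ V₂]
  {κ : ℂ} {B₁ : V₁ →ₗ[ℂ] V₁ →ₗ[ℂ] ℂ} {B₂ : V₂ →ₗ[ℂ] V₂ →ₗ[ℂ] ℂ}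
  {B : (V₁ × V₂) →ₗ[ℂ] (V₁ × V₂) →ₗ[ℂ] ℂ}

lemma blockOrthogonal_glueList (hB : ∀ z w : V₁ × V₂, B z w = B₁ z.1 w.1 + B₂ z.2 w.2)
    {p q N : ℕ} (η : Fin p → V₁) (ξ : Fin q → V₂) (h : p + q = 2 * N) :
    BlockOrthogonal B (glueList η ξ h) p := by
  intro x y hxy
  rw [hB]
  rcases lt_or_ge (x : ℕ) p with hx | hx
  · have hy : p ≤ (y : ℕ) := by
      by_contra hy
      exact hxy (iff_of_true hx (by omega))
    rw [glueList_snd_eq_zero η ξ h hx, glueList_fst_eq_zero η ξ h hy]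
    simp
  · have hy : (y : ℕ) < p := by
      by_contra hy
      exact hxy (iff_of_false (by omega) hy)
    rw [glueList_fst_eq_zero η ξ h hx, glueList_snd_eq_zero η ξ h hy]
    simp

lemma ampl_glueList_eq_zero (hB : ∀ z w : V₁ × V₂, B z w = B₁ z.1 w.1 + B₂ z.2 w.2)
    {p q N : ℕ} (η : Fin p → V₁) (ξ : Fin q → V₂) (h : p + q = 2 * N) (hp : Odd p) :
    ampl κ B N (glueList η ξ h) = 0 := by
  rw [ampl_eq_sum_pairTerm, sum_pairTerm_eq_zero_of_odd (blockOrthogonal_glueList hB η ξ h) hp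
    (by omega), mul_zero]

variable {P Q : ℕ} (η : Fin (2 * P) → V₁) (ξ : Fin (2 * Q) → V₂)
  (h : 2 * P + 2 * Q = 2 * (Q + P))

lemma pairTerm_gluePerm (hB : ∀ z w : V₁ × V₂, B z w = B₁ z.1 w.1 + B₂ z.2 w.2)
    (σ₁ : Perm (Fin (2 * P))) (σ₂ : Perm (Fin (2 * Q))) :
    pairTerm κ B (glueList η ξ h) (gluePerm σ₁ σ₂) =
      pairTerm κ B₁ η σ₁ * pairTerm κ B₂ ξ σ₂ := by
  have h₁ (k : Fin P) :
      B (glueList η ξ h (gluePerm σ₁ σ₂ (slotPos _ (.inl (Fin.natAdd Q k)))))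
        (glueList η ξ h (gluePerm σ₁ σ₂ (slotPos _ (.inr (Fin.natAdd Q k))))) =
      B₁ (η (σ₁ (slotPos P (.inl k)))) (η (σ₁ (slotPos P (.inr k)))) := by
    rw [← Sum.map_inl (Fin.natAdd Q) (Fin.natAdd Q), ← Sum.map_inr (Fin.natAdd Q) (Fin.natAdd Q),
      gluePerm_slotPos_natAdd, gluePerm_slotPos_natAdd, glueList_blockEquiv_inl,
      glueList_blockEquiv_inl, hB]
    simp
  have h₂ (k : Fin Q) :
      B (glueList η ξ h (gluePerm σ₁ σ₂ (slotPos _ (.inl (Fin.castAdd P k)))))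
        (glueList η ξ h (gluePerm σ₁ σ₂ (slotPos _ (.inr (Fin.castAdd P k))))) =
      B₂ (ξ (σ₂ (slotPos Q (.inl k)))) (ξ (σ₂ (slotPos Q (.inr k)))) := by
    rw [← Sum.map_inl (Fin.castAdd P) (Fin.castAdd P),
      ← Sum.map_inr (Fin.castAdd P) (Fin.castAdd P), gluePerm_slotPos_castAdd,
      gluePerm_slotPos_castAdd, glueList_blockEquiv_inr, glueList_blockEquiv_inr, hB]
    simp
  simp only [pairTerm, ksgn_eq_mul_of_sign_eq (sign_gluePerm σ₁ σ₂), Fin.prod_univ_add, h₁, h₂]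
  ring

lemma sum_ite_splitsAt_lastSlots (hB : ∀ z w : V₁ × V₂, B z w = B₁ z.1 w.1 + B₂ z.2 w.2) :
    ∑ σ, (if SplitsAt (2 * P) (lastSlots P Q) σ then pairTerm κ B (glueList η ξ h) σ else 0) =
      (∑ σ₁, pairTerm κ B₁ η σ₁) * ∑ σ₂, pairTerm κ B₂ ξ σ₂ := by
  rw [Fintype.sum_mul_sum, ← Fintype.sum_prod_type']
  refine (Fintype.sum_of_injective _ gluePerm_injective _ _
    (fun σ hσ => if_neg fun hs => hσ ?_) fun σ => ?_).symm
  · obtain ⟨σ₁, σ₂, rfl⟩ := exists_gluePerm_of_splitsAt hs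
    exact ⟨(σ₁, σ₂), rfl⟩
  · rw [if_pos (splitsAt_gluePerm _ _), pairTerm_gluePerm η ξ h hB]

lemma ampl_glueList (hB : ∀ z w : V₁ × V₂, B z w = B₁ z.1 w.1 + B₂ z.2 w.2) :
    ampl κ B (Q + P) (glueList η ξ h) = ampl κ B₁ P η * ampl κ B₂ Q ξ := by
  rw [ampl_eq_sum_pairTerm, ampl_eq_sum_pairTerm, ampl_eq_sum_pairTerm,
    sum_pairTerm_eq_choose_mul (blockOrthogonal_glueList hB η ξ h) card_lastSlots,
    sum_ite_splitsAt_lastSlots η ξ h hB, ← Nat.choose_symm_add, Nat.cast_add_choose]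
  field_simp [Nat.factorial_ne_zero]

end Glue

end Gluing

theorem stmt_12_general {V₁ V₂ : Type*} [AddCommGroup V₁] [Module ℂ V₁]
    [AddCommGroup V₂] [Module ℂ V₂]
    (κ : ℂ)
    (B₁ : V₁ →ₗ[ℂ] V₁ →ₗ[ℂ] ℂ) (B₂ : V₂ →ₗ[ℂ] V₂ →ₗ[ℂ] ℂ)
    (B : (V₁ × V₂) →ₗ[ℂ] (V₁ × V₂) →ₗ[ℂ] ℂ)
    (hB : ∀ z w : V₁ × V₂, B z w = B₁ z.1 w.1 + B₂ z.2 w.2)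
    (p q N : ℕ) (hpq : p + q = 2 * N)
    (η : Fin p → V₁) (ξ : Fin q → V₂) :
    (Odd p → Odd q →
      ampl κ B N (fun i =>
        Fin.append (fun j => (η j, (0 : V₂))) (fun j => ((0 : V₁), ξ j))
          (Fin.cast hpq.symm i)) = 0) ∧
    (∀ (P Q : ℕ) (hP : p = 2 * P) (hQ : q = 2 * Q),
      ampl κ B N (fun i =>
        Fin.append (fun j => (η j, (0 : V₂))) (fun j => ((0 : V₁), ξ j))
          (Fin.cast hpq.symm i)) =
      ampl κ B₁ P (fun i => η (Fin.cast hP.symm i)) *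
        ampl κ B₂ Q (fun i => ξ (Fin.cast hQ.symm i))) := by
  refine ⟨fun hp _ => Gluing.ampl_glueList_eq_zero hB η ξ hpq hp, fun P Q hP hQ => ?_⟩
  subst hP hQ
  obtain rfl : N = Q + P := by omega
  exact Gluing.ampl_glueList η ξ hpq hB

/-- Disjoint gluing / factorization of amplitudes: for the list
`z = ((η₁,0), …, (η_p,0), (0,ξ₁), …, (0,ξ_q))` in `V₁ × V₂`, with the direct-sum form
`B ((a,b)) ((a',b')) = B₁ a a' + B₂ b b'`, the amplitude `A(z)` vanishes when `p, q` are
both odd, and factorizes as `A₁(η) · A₂(ξ)` when `p, q` are both even. -/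
theorem stmt_12 {V₁ V₂ : Type*} [AddCommGroup V₁] [Module ℂ V₁]
    [AddCommGroup V₂] [Module ℂ V₂]
    (κ : ℂ) (hκ : κ = 1 ∨ κ = -1)
    (B₁ : V₁ →ₗ[ℂ] V₁ →ₗ[ℂ] ℂ) (B₂ : V₂ →ₗ[ℂ] V₂ →ₗ[ℂ] ℂ)
    (B : (V₁ × V₂) →ₗ[ℂ] (V₁ × V₂) →ₗ[ℂ] ℂ)
    (hB : ∀ z w : V₁ × V₂, B z w = B₁ z.1 w.1 + B₂ z.2 w.2)
    (p q N : ℕ) (hpq : p + q = 2 * N)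
    (η : Fin p → V₁) (ξ : Fin q → V₂) :
    (Odd p → Odd q →
      ampl κ B N (fun i =>
        Fin.append (fun j => (η j, (0 : V₂))) (fun j => ((0 : V₁), ξ j))
          (Fin.cast hpq.symm i)) = 0) ∧
    (∀ (P Q : ℕ) (hP : p = 2 * P) (hQ : q = 2 * Q),
      ampl κ B N (fun i =>
        Fin.append (fun j => (η j, (0 : V₂))) (fun j => ((0 : V₁), ξ j))
          (Fin.cast hpq.symm i)) =
      ampl κ B₁ P (fun i => η (Fin.cast hP.symm i)) *
        ampl κ B₂ Q (fun i => ξ (Fin.cast hQ.symm i))) :=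
  stmt_12_general κ B₁ B₂ B hB p q N hpq η ξ
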